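/- arXiv:1203.1958 — 3 statements merged into one kernel-verified Lean document; each statement's English description precedes it below -/
import Mathlib

section
/- The Cauchy transform of the uniform measure (1/2)·1_{(-1,1)}(x) dx is G(z) = (log(1+z) − log(z−1))/2, and its inverse is given by G⁻¹(y) = (coth(y/2) + tanh(y/2))/2; that is, G((coth(y/2) + tanh(y/2))/2) = y for y in an appropriate domain. -/
open MeasureTheory Complex

/-! An antiderivative of `x ↦ (z - x)⁻¹` is `x ↦ -log (z - x)` as long as `z - x` stays off the
branch cut `(-∞, 0]`. For the inverse, `(coth (y/2) + tanh (y/2)) / 2 = coth y` and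
`(coth y + 1) / (coth y - 1) = exp (2y)`, so the Cauchy transform at `coth y` is
`½ log (exp (2y)) = y`. -/

open Set intervalIntegral
open scoped Interval

theorem Complex.log_ofReal_of_neg {x : ℝ} (hx : x < 0) :
    log (x : ℂ) = Real.log (-x) + Real.pi * I := by
  have hx' : (x : ℂ) = ((-x : ℝ) : ℂ) * (-1) := by push_cast; ring
  rw [hx', log_ofReal_mul (neg_pos.2 hx) (by norm_num), log_neg_one]

theorem integral_inv_const_sub {a b c : ℝ} (hc : c ∉ [[a, b]]) :
    ∫ x in a..b, (c - x)⁻¹ = Real.log ((c - a) / (c - b)) := by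
  rw [integral_comp_sub_left (·⁻¹) c, integral_inv]
  simp only [mem_uIcc, sub_nonneg, sub_nonpos] at hc ⊢
  tauto

theorem integral_inv_sub_ofReal_of_mem_slitPlane {z : ℂ} {a b : ℝ}
    (hz : ∀ x ∈ [[a, b]], z - x ∈ slitPlane) :
    ∫ x in a..b, (z - x)⁻¹ = log (z - a) - log (z - b) := by
  have hderiv : ∀ x ∈ [[a, b]], HasDerivAt (fun x : ℝ => -log (z - x)) (z - x)⁻¹ x := by
    intro x hx
    have := ((((hasDerivAt_id x).ofReal_comp).const_sub z).clog_real (hz x hx)).neg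
    simp only [id, ofReal_one, neg_div, neg_neg, one_div] at this
    exact this
  have hcont : ContinuousOn (fun x : ℝ => (z - x)⁻¹) [[a, b]] :=
    (continuous_const.sub continuous_ofReal).continuousOn.inv₀ fun x hx =>
      slitPlane_ne_zero (hz x hx)
  rw [integral_eq_sub_of_hasDerivAt hderiv hcont.intervalIntegrable]
  ring

theorem integral_inv_sub_ofReal {z : ℂ} {a b : ℝ} (hab : a ≤ b) (hz : z ∉ ofReal '' Icc a b) :
    ∫ x in a..b, (z - x)⁻¹ = log (z - a) - log (z - b) := by
  by_cases hslit : z.im ≠ 0 ∨ b < z.re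
  · refine integral_inv_sub_ofReal_of_mem_slitPlane fun x hx => ?_
    rw [uIcc_of_le hab] at hx
    rcases hslit with him | hre
    · exact Or.inr (by simpa using him)
    · exact Or.inl (by simp only [sub_re, ofReal_re, sub_pos]; linarith [hx.2])
  · -- `z` is real and left of `[a, b]`: the integrand is real, and the two `π i` jumps cancel.
    push Not at hslit
    obtain ⟨him, hre⟩ := hslit
    obtain ⟨r, rfl⟩ : ∃ r : ℝ, (r : ℂ) = z := ⟨z.re, Complex.ext (by simp) (by simp [him])⟩
    have hra : r < a := by
      by_contra! h
      exact hz ⟨r, ⟨h, by simpa using hre⟩, rfl⟩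
    have hr : r ∉ [[a, b]] := by rw [uIcc_of_le hab]; exact fun h => (h.1.trans_lt hra).false
    simp_rw [← ofReal_sub, ← ofReal_inv, integral_ofReal, integral_inv_const_sub hr,
      log_ofReal_of_neg (sub_neg.2 hra), log_ofReal_of_neg (sub_neg.2 (hra.trans_le hab)),
      Real.log_div (sub_neg.2 hra).ne (sub_neg.2 (hra.trans_le hab)).ne,
      ← Real.log_neg_eq_log (r - _)]
    push_cast
    ring

theorem Real.cosh_div_sinh_half_add_tanh_half (t : ℝ) :
    (Real.cosh (t / 2) / Real.sinh (t / 2) + Real.tanh (t / 2)) / 2 =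
      Real.cosh t / Real.sinh t := by
  obtain ⟨s, rfl⟩ : ∃ s, t = 2 * s := ⟨t / 2, by ring⟩
  rcases eq_or_ne s 0 with rfl | hs
  · simp
  have := Real.cosh_pos s
  have hs' : Real.sinh s ≠ 0 := by simpa using hs
  rw [mul_div_cancel_left₀ s two_ne_zero, Real.tanh_eq_sinh_div_cosh, Real.cosh_two_mul,
    Real.sinh_two_mul]
  field_simp

theorem Real.cosh_div_sinh_add_one_div_sub_one {y : ℝ} (hy : y ≠ 0) :
    (Real.cosh y / Real.sinh y + 1) / (Real.cosh y / Real.sinh y - 1) = Real.exp (2 * y) := by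
  have hs : Real.sinh y ≠ 0 := by simpa using hy
  rw [div_add_one hs, div_sub_one hs, div_div_div_cancel_right₀ hs, Real.cosh_add_sinh,
    Real.cosh_sub_sinh, ← Real.exp_sub]
  ring_nf

theorem Real.one_lt_cosh_div_sinh {y : ℝ} (hy : 0 < y) : 1 < Real.cosh y / Real.sinh y := by
  rw [one_lt_div (Real.sinh_pos_iff.2 hy), ← sub_pos, Real.cosh_sub_sinh]
  exact Real.exp_pos _

/-- The Cauchy transform of the uniform measure `(1/2)·1_{(-1,1)}(x) dx` is
`G(z) = (log(1+z) - log(z-1))/2`, and its functional inverse is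
`G⁻¹(y) = (coth(y/2) + tanh(y/2))/2` (stated on real `y > 0`). -/
theorem cauchy_transform_uniform :
    (∀ z : ℂ, z ∉ Complex.ofReal '' Set.Icc (-1 : ℝ) 1 →
      (∫ x in Set.Ioo (-1 : ℝ) 1, (1 / 2 : ℂ) * (z - (x : ℂ))⁻¹) =
        (Complex.log (1 + z) - Complex.log (z - 1)) / 2) ∧
    (∀ y : ℝ, 0 < y →
      (∫ x in Set.Ioo (-1 : ℝ) 1,
        (1 / 2 : ℝ) * ((Real.cosh (y / 2) / Real.sinh (y / 2) + Real.tanh (y / 2)) / 2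
          - x)⁻¹) = y) := by
  refine ⟨fun z hz => ?_, fun y hy => ?_⟩
  · rw [← integral_Ioc_eq_integral_Ioo, ← integral_of_le (by norm_num),
      intervalIntegral.integral_const_mul, integral_inv_sub_ofReal (by norm_num) hz]
    push_cast
    ring_nf
  · have hc : Real.cosh y / Real.sinh y ∉ [[-1, 1]] := by
      rw [uIcc_of_le (by norm_num)]
      exact fun h => (Real.one_lt_cosh_div_sinh hy).not_ge h.2
    rw [Real.cosh_div_sinh_half_add_tanh_half, ← integral_Ioc_eq_integral_Ioo,
      ← integral_of_le (by norm_num), intervalIntegral.integral_const_mul,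
      integral_inv_const_sub hc, sub_neg_eq_add, Real.cosh_div_sinh_add_one_div_sub_one hy.ne',
      Real.log_exp]
    ring
end

section
/- The function J₊⁻¹(z) = z − √(z−1)·√(z+1) (principal branches of the square root) is a right inverse of the Joukowsky map J(w) = (w + 1/w)/2 on the slit plane: for all z ∈ ℂ \ [−1,1], J(J₊⁻¹(z)) = z, and |J₊⁻¹(z)| < 1. -/
/-!
Put `a = √(z-1)` and `b = √(z+1)`. Since `a² + b² = 2z` and `b² - a² = 2`, the numbers
`z ∓ ab = (a ∓ b)²/2` are mutually inverse, so `J(z - ab) = z`, and `|z - ab| < 1` amounts to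
`|a - b| < |a + b|`, i.e. `Re (a b̄) > 0`. Principal square roots lie in the closed right
half-plane with imaginary part of the sign of `Im z`, so `Re (a b̄) ≥ 0`; and `Re (a b̄) = 0`
would make `(a b̄)² = (z - 1)(z̄ + 1) = |z|² - 1 + 2i Im z` a nonpositive real, forcing
`z ∈ [-1, 1]`.
-/

open Complex ComplexConjugate

noncomputable def joukowsky (w : ℂ) : ℂ := (w + w⁻¹) / 2

noncomputable def joukowskyInv (z : ℂ) : ℂ := z - sqrt (z - 1) * sqrt (z + 1)

namespace Complex

theorem sqrt_sq (x : ℂ) : sqrt x ^ 2 = x := cpow_ofNat_inv_pow x 2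

theorem re_sqrt_nonneg (x : ℂ) : 0 ≤ (sqrt x).re := by
  rw [sqrt, cpow_inv_two_re]
  exact Real.sqrt_nonneg _

theorem im_sqrt_mul_im_sqrt_nonneg {x y : ℂ} (h : 0 ≤ x.im ↔ 0 ≤ y.im) :
    0 ≤ (sqrt x).im * (sqrt y).im := by
  by_cases hx : 0 ≤ x.im
  · rw [sqrt, sqrt, cpow_inv_two_im_eq_sqrt hx, cpow_inv_two_im_eq_sqrt (h.1 hx)]
    positivity
  · have hy : y.im < 0 := not_le.1 (mt h.2 hx)
    rw [sqrt, sqrt, cpow_inv_two_im_eq_neg_sqrt (not_le.1 hx), cpow_inv_two_im_eq_neg_sqrt hy,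
      neg_mul_neg]
    positivity

theorem re_sqrt_mul_conj_sqrt_nonneg {x y : ℂ} (h : 0 ≤ x.im ↔ 0 ≤ y.im) :
    0 ≤ (sqrt x * conj (sqrt y)).re := by
  rw [mul_re, conj_re, conj_im, mul_neg, sub_neg_eq_add]
  exact add_nonneg (mul_nonneg (re_sqrt_nonneg x) (re_sqrt_nonneg y))
    (im_sqrt_mul_im_sqrt_nonneg h)

theorem re_ne_zero_of_sq {w : ℂ} (hw : (w ^ 2).im ≠ 0 ∨ 0 < (w ^ 2).re) : w.re ≠ 0 := by
  intro hre
  rw [sq, mul_re, mul_im, hre] at hw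
  simp only [zero_mul, mul_zero, add_zero, zero_sub, ne_eq, not_true_eq_false, false_or,
    Left.neg_pos_iff] at hw
  exact (mul_self_nonneg w.im).not_gt hw

end Complex

theorem im_ne_zero_or_one_lt_normSq {z : ℂ} (hz : z ∉ ofReal '' Set.Icc (-1 : ℝ) 1) :
    z.im ≠ 0 ∨ 1 < normSq z := by
  by_contra! h
  obtain ⟨him, hnorm⟩ := h
  have hre : z.re ^ 2 ≤ 1 := by simpa [normSq_apply, him, sq] using hnorm
  exact hz ⟨z.re, abs_le.1 ((sq_le_one_iff_abs_le_one _).1 hre), ext rfl him.symm⟩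

theorem re_sqrt_sub_one_mul_conj_sqrt_add_one_pos {z : ℂ}
    (hz : z ∉ ofReal '' Set.Icc (-1 : ℝ) 1) :
    0 < (sqrt (z - 1) * conj (sqrt (z + 1))).re := by
  have hsq : (sqrt (z - 1) * conj (sqrt (z + 1))) ^ 2 = (z - 1) * conj (z + 1) := by
    rw [mul_pow, ← map_pow, sqrt_sq, sqrt_sq]
  refine (re_sqrt_mul_conj_sqrt_nonneg (by simp)).lt_of_ne' (re_ne_zero_of_sq ?_)
  rw [hsq]
  rcases im_ne_zero_or_one_lt_normSq hz with him | hnorm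
  · left
    simp only [mul_im, sub_re, sub_im, add_re, conj_re, conj_im, add_im, one_re, one_im]
    contrapose! him
    linarith
  · right
    simp only [mul_re, sub_re, add_re, conj_re, conj_im, sub_im, add_im, one_re, one_im]
    rw [normSq_apply] at hnorm
    linarith

section

variable {z a b : ℂ}

theorem sub_mul_mul_add_mul_eq_one (ha : a ^ 2 = z - 1) (hb : b ^ 2 = z + 1) :
    (z - a * b) * (z + a * b) = 1 := by
  linear_combination (-b ^ 2) * ha - (z - 1) * hb

theorem joukowsky_sub_mul (ha : a ^ 2 = z - 1) (hb : b ^ 2 = z + 1) :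
    joukowsky (z - a * b) = z := by
  rw [joukowsky, inv_eq_of_mul_eq_one_right (sub_mul_mul_add_mul_eq_one ha hb)]
  ring

theorem norm_sub_mul_lt_one (ha : a ^ 2 = z - 1) (hb : b ^ 2 = z + 1)
    (hab : 0 < (a * conj b).re) : ‖z - a * b‖ < 1 := by
  have hminus : z - a * b = (a - b) ^ 2 / 2 := by linear_combination (-ha - hb) / 2
  have hplus : z + a * b = (a + b) ^ 2 / 2 := by linear_combination (-ha - hb) / 2
  have hlt : ‖z - a * b‖ < ‖z + a * b‖ := by
    rw [hminus, hplus, norm_div, norm_div, norm_pow, norm_pow, Complex.sq_norm, Complex.sq_norm,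
      normSq_sub, normSq_add]
    exact div_lt_div_of_pos_right (by linarith) (by norm_num)
  have hmul : ‖z - a * b‖ * ‖z + a * b‖ = 1 := by
    rw [← norm_mul, sub_mul_mul_add_mul_eq_one ha hb, norm_one]
  nlinarith [norm_nonneg (z - a * b)]

end

/-- `J₊⁻¹(z) = z - √(z-1)·√(z+1)` (principal branches) is a right inverse of
the Joukowsky map `J(w) = (w + 1/w)/2` on `ℂ \ [-1,1]`, with values in the
open unit disk. -/
theorem joukowsky_right_inverse (z : ℂ)
    (hz : z ∉ Complex.ofReal '' Set.Icc (-1 : ℝ) 1) :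
    ((z - (z - 1) ^ ((1 : ℂ) / 2) * (z + 1) ^ ((1 : ℂ) / 2)) +
        (z - (z - 1) ^ ((1 : ℂ) / 2) * (z + 1) ^ ((1 : ℂ) / 2))⁻¹) / 2 = z ∧
    ‖z - (z - 1) ^ ((1 : ℂ) / 2) * (z + 1) ^ ((1 : ℂ) / 2)‖ < 1 := by
  rw [one_div]
  change joukowsky (joukowskyInv z) = z ∧ ‖joukowskyInv z‖ < 1
  exact ⟨joukowsky_sub_mul (sqrt_sq _) (sqrt_sq _),
    norm_sub_mul_lt_one (sqrt_sq _) (sqrt_sq _) (re_sqrt_sub_one_mul_conj_sqrt_add_one_pos hz)⟩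
end

section
/- For w in the open unit disk with w ≠ 0 and J(w) ∉ [−1,1], one has J₊⁻¹(J(w)) = w, where J(w) = (w + 1/w)/2 and J₊⁻¹(z) = z − √(z−1)√(1+z) with principal branch square roots. -/
/-!
Put `z = J(w)` and `t = (w⁻¹ - w) / 2`, so that `z - t = w` and `(z - 1)(z + 1) = t²`.
The product `s` of the principal square roots of `z - 1` and `z + 1` is therefore `± t`.
The sign is fixed by comparing directions with `z`: writing `p² = z - 1`, `q² = z + 1`, one has
`Re (s z̄) = (|p|² + |q|²) Re (p q̄) / 2 ≥ 0`, because `z ± 1` lie in the same half-plane and so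
do their principal roots, whereas `Re (t z̄) = (|w|⁻² - |w|²) / 4 > 0` for `0 < |w| < 1`.
-/

open Complex ComplexConjugate

namespace Complex

theorem re_cpow_inv_two_nonneg (a : ℂ) : 0 ≤ (a ^ (2⁻¹ : ℂ)).re := by
  rw [cpow_inv_two_re]
  exact Real.sqrt_nonneg _

theorem im_cpow_inv_two_nonneg {a : ℂ} (ha : 0 ≤ a.im) : 0 ≤ (a ^ (2⁻¹ : ℂ)).im := by
  rw [cpow_inv_two_im_eq_sqrt ha]
  exact Real.sqrt_nonneg _

theorem im_cpow_inv_two_nonpos {a : ℂ} (ha : a.im < 0) : (a ^ (2⁻¹ : ℂ)).im ≤ 0 := by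
  rw [cpow_inv_two_im_eq_neg_sqrt ha, neg_nonpos]
  exact Real.sqrt_nonneg _

theorem re_cpow_inv_two_mul_conj_nonneg {a b : ℂ} (h : 0 ≤ a.im ↔ 0 ≤ b.im) :
    0 ≤ (a ^ (2⁻¹ : ℂ) * conj (b ^ (2⁻¹ : ℂ))).re := by
  have hre := mul_nonneg (re_cpow_inv_two_nonneg a) (re_cpow_inv_two_nonneg b)
  have him : 0 ≤ (a ^ (2⁻¹ : ℂ)).im * (b ^ (2⁻¹ : ℂ)).im := by
    by_cases ha : 0 ≤ a.im
    · exact mul_nonneg (im_cpow_inv_two_nonneg ha) (im_cpow_inv_two_nonneg (h.mp ha))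
    · exact mul_nonneg_of_nonpos_of_nonpos (im_cpow_inv_two_nonpos (not_le.mp ha))
        (im_cpow_inv_two_nonpos (not_le.mp (mt h.mpr ha)))
  simp only [mul_re, conj_re, conj_im]
  linarith

theorem re_mul_mul_conj_sq_add_sq (p q : ℂ) :
    (p * q * conj (p ^ 2 + q ^ 2)).re = (normSq p + normSq q) * (p * conj q).re := by
  simp only [mul_re, mul_im, conj_re, conj_im, add_re, add_im, pow_two, normSq_apply]
  ring

theorem re_cpow_inv_two_mul_cpow_inv_two_mul_conj_nonneg (z : ℂ) :
    0 ≤ ((z - 1) ^ (2⁻¹ : ℂ) * (z + 1) ^ (2⁻¹ : ℂ) * conj z).re := by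
  set p := (z - 1) ^ (2⁻¹ : ℂ)
  set q := (z + 1) ^ (2⁻¹ : ℂ)
  have hz : z = (p ^ 2 + q ^ 2) / 2 := by
    simp only [p, q, cpow_ofNat_inv_pow]
    ring
  have hpq : 0 ≤ (p * conj q).re := re_cpow_inv_two_mul_conj_nonneg (by simp)
  calc 0 ≤ (normSq p + normSq q) * (p * conj q).re / 2 :=
        div_nonneg (mul_nonneg (add_nonneg (normSq_nonneg p) (normSq_nonneg q)) hpq) two_pos.le
    _ = _ := by
      rw [← re_mul_mul_conj_sq_add_sq, hz, map_div₀, conj_ofNat, mul_div_assoc', div_ofNat_re]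

end Complex

theorem eq_of_sq_eq_of_re_mul_conj {s t u : ℂ} (hst : s ^ 2 = t ^ 2) (hs : 0 ≤ (s * conj u).re)
    (ht : 0 < (t * conj u).re) : s = t := by
  refine (sq_eq_sq_iff_eq_or_eq_neg.mp hst).resolve_right fun h => ?_
  rw [h, neg_mul, neg_re] at hs
  linarith

section Joukowsky

variable {w : ℂ}

theorem joukowsky_sub_one_mul_add_one (hw : w ≠ 0) :
    ((w + w⁻¹) / 2 - 1) * ((w + w⁻¹) / 2 + 1) = ((w⁻¹ - w) / 2) ^ 2 := by
  field_simp
  ring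

theorem re_mul_conj_joukowsky (hw : w ≠ 0) :
    ((w⁻¹ - w) / 2 * conj ((w + w⁻¹) / 2)).re = ((normSq w)⁻¹ - normSq w) / 4 := by
  have hn : normSq w ≠ 0 := normSq_eq_zero.not.mpr hw
  rw [inv_def]
  simp only [mul_re, mul_im, conj_re, conj_im, div_ofNat_re, div_ofNat_im, sub_re, sub_im,
    add_re, add_im, ofReal_re, ofReal_im]
  field_simp
  rw [normSq_apply]
  ring

theorem re_mul_conj_joukowsky_pos (hw : ‖w‖ < 1) (hw0 : w ≠ 0) :
    0 < ((w⁻¹ - w) / 2 * conj ((w + w⁻¹) / 2)).re := by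
  have hpos : 0 < normSq w := normSq_pos.mpr hw0
  have hlt : normSq w < 1 := by
    rw [normSq_eq_norm_sq]
    exact pow_lt_one₀ (norm_nonneg w) hw two_ne_zero
  rw [re_mul_conj_joukowsky hw0]
  have := one_lt_inv₀ hpos |>.mpr hlt
  linarith

end Joukowsky

theorem joukowsky_left_inverse_general (w : ℂ) (hw : ‖w‖ < 1) (hw0 : w ≠ 0) :
    (w + w⁻¹) / 2 -
        ((w + w⁻¹) / 2 - 1) ^ ((1 : ℂ) / 2) * ((w + w⁻¹) / 2 + 1) ^ ((1 : ℂ) / 2) = w := by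
  set z := (w + w⁻¹) / 2
  have hroot : (z - 1) ^ (2⁻¹ : ℂ) * (z + 1) ^ (2⁻¹ : ℂ) = (w⁻¹ - w) / 2 := by
    refine eq_of_sq_eq_of_re_mul_conj ?_ (re_cpow_inv_two_mul_cpow_inv_two_mul_conj_nonneg z)
      (re_mul_conj_joukowsky_pos hw hw0)
    rw [mul_pow, cpow_ofNat_inv_pow, cpow_ofNat_inv_pow, joukowsky_sub_one_mul_add_one hw0]
  rw [one_div, hroot]
  ring

/-- `J₊⁻¹(J(w)) = w` for `w` in the punctured open unit disk with
`J(w) ∉ [-1,1]`, where `J(w) = (w + 1/w)/2` and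
`J₊⁻¹(z) = z - √(z-1)√(z+1)` with principal branch square roots. -/
theorem joukowsky_left_inverse (w : ℂ) (hw : ‖w‖ < 1) (hw0 : w ≠ 0)
    (hJ : (w + w⁻¹) / 2 ∉ Complex.ofReal '' Set.Icc (-1 : ℝ) 1) :
    (w + w⁻¹) / 2 -
        ((w + w⁻¹) / 2 - 1) ^ ((1 : ℂ) / 2) * ((w + w⁻¹) / 2 + 1) ^ ((1 : ℂ) / 2) = w :=
  joukowsky_left_inverse_general w hw hw0
end
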